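/- Let α, β > 0 and let X = (X_t)_{t ≥ 0} be a non-trivial process that is strictly β-stable and (α/β)-selfsimilar. Then X is an α-IDT process. -/

import Mathlib

open MeasureTheory ProbabilityTheory

/-- Two processes (indexed by nonnegative real times) have the same finite-dimensional
distributions: for every finite family of nonnegative times, the laws of the corresponding
finite-dimensional marginals coincide. -/
def HasSameFDD {Ω Ω' : Type*} [MeasurableSpace Ω] [MeasurableSpace Ω']
    (P : Measure Ω) (P' : Measure Ω') (X : ℝ → Ω → ℝ) (Y : ℝ → Ω' → ℝ) : Prop :=
  ∀ (m : ℕ) (t : Fin m → ℝ), (∀ i, 0 ≤ t i) →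
    Measure.map (fun ω i => X (t i) ω) P = Measure.map (fun ω i => Y (t i) ω) P'

/-- A process `X` is `α`-IDT if for every positive integer `n`, the time-rescaled process
`(X_{n^{1/α} t})_{t ≥ 0}` has the same finite-dimensional distributions as the sum of `n`
independent copies of `X` (realized canonically on the `n`-fold product space). -/
def IsAlphaIDT {Ω : Type*} [MeasurableSpace Ω] (P : Measure Ω) (α : ℝ)
    (X : ℝ → Ω → ℝ) : Prop :=
  ∀ n : ℕ, 0 < n →
    HasSameFDD P (Measure.pi fun _ : Fin n => P)
      (fun t ω => X ((n : ℝ) ^ (1 / α) * t) ω)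
      (fun t ω => ∑ j, X t (ω j))
/-- A process is `H`-selfsimilar: for every `a > 0`, `(X_{at})_{t ≥ 0}` has the same
finite-dimensional distributions as `(a^H X_t)_{t ≥ 0}`. -/
def IsSelfSimilar {Ω : Type*} [MeasurableSpace Ω] (P : Measure Ω) (H : ℝ)
    (X : ℝ → Ω → ℝ) : Prop :=
  ∀ a : ℝ, 0 < a → HasSameFDD P P (fun t ω => X (a * t) ω) (fun t ω => a ^ H * X t ω)

/-- A process is strictly `β`-stable: for every positive integer `n`, the sum of `n`
independent copies of `X` (realized canonically on the `n`-fold product space) has the same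
finite-dimensional distributions as `(n^{1/β} X_t)_{t ≥ 0}`. -/
def IsStrictlyStable {Ω : Type*} [MeasurableSpace Ω] (P : Measure Ω) (β : ℝ)
    (X : ℝ → Ω → ℝ) : Prop :=
  ∀ n : ℕ, 0 < n →
    HasSameFDD (Measure.pi fun _ : Fin n => P) P
      (fun t ω => ∑ j, X t (ω j))
      (fun t ω => (n : ℝ) ^ (1 / β) * X t ω)

/-- A process is non-trivial if at some nonnegative time it is not almost surely constant. -/
def IsNonTrivialProcess {Ω : Type*} [MeasurableSpace Ω] (P : Measure Ω)
    (X : ℝ → Ω → ℝ) : Prop :=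
  ∃ t : ℝ, 0 ≤ t ∧ ∀ c : ℝ, ¬ (X t =ᵐ[P] fun _ => c)

namespace HasSameFDD

variable {Ω Ω' Ω'' : Type*} [MeasurableSpace Ω] [MeasurableSpace Ω'] [MeasurableSpace Ω'']
  {P : Measure Ω} {P' : Measure Ω'} {P'' : Measure Ω''}
  {X : ℝ → Ω → ℝ} {Y : ℝ → Ω' → ℝ} {Z : ℝ → Ω'' → ℝ}

theorem symm (h : HasSameFDD P P' X Y) : HasSameFDD P' P Y X :=
  fun m t ht => (h m t ht).symm

theorem trans (h₁ : HasSameFDD P P' X Y) (h₂ : HasSameFDD P' P'' Y Z) :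
    HasSameFDD P P'' X Z :=
  fun m t ht => (h₁ m t ht).trans (h₂ m t ht)

end HasSameFDD

theorem Real.rpow_one_div_rpow_div {x : ℝ} (hx : 0 ≤ x) {α : ℝ} (hα : α ≠ 0) (β : ℝ) :
    (x ^ (1 / α)) ^ (α / β) = x ^ (1 / β) := by
  rw [← Real.rpow_mul hx, div_mul_div_cancel₀ hα]

theorem stmt13_general {Ω : Type*} [MeasurableSpace Ω] (P : Measure Ω)
    (α β : ℝ) (hα : 0 < α) (X : ℝ → Ω → ℝ)
    (hstable : IsStrictlyStable P β X)
    (hss : IsSelfSimilar P (α / β) X) :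
    IsAlphaIDT P α X := by
  intro n hn
  have hn' : (0 : ℝ) < n := by exact_mod_cast hn
  have hrescale := hss _ (Real.rpow_pos_of_pos hn' (1 / α))
  rw [Real.rpow_one_div_rpow_div hn'.le hα.ne'] at hrescale
  exact hrescale.trans (hstable n hn).symm

/-- a non-trivial strictly `β`-stable and `(α/β)`-selfsimilar process is an
`α`-IDT process. -/
theorem stmt13 {Ω : Type*} [MeasurableSpace Ω] (P : Measure Ω) [IsProbabilityMeasure P]
    (α β : ℝ) (hα : 0 < α) (hβ : 0 < β) (X : ℝ → Ω → ℝ) (hXmeas : ∀ t, Measurable (X t))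
    (hnt : IsNonTrivialProcess P X)
    (hstable : IsStrictlyStable P β X)
    (hss : IsSelfSimilar P (α / β) X) :
    IsAlphaIDT P α X :=
  stmt13_general P α β hα X hstable hss
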